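/- Let G be a finite simple graph with m(G) = 2^β(G), and let S be a vertex cover of G of minimum size |S| = β(G). Then S is an independent set of G. -/

import Mathlib

variable {V : Type*}

/-- `S` is an independent set of `G`: no two vertices of `S` are adjacent. -/
def IsIndepSet (G : SimpleGraph V) (S : Set V) : Prop :=
  ∀ ⦃u v : V⦄, u ∈ S → v ∈ S → ¬ G.Adj u v

/-- `S` is a maximal independent set of `G`. -/
def IsMaxIndepSet (G : SimpleGraph V) (S : Set V) : Prop :=
  IsIndepSet G S ∧ ∀ T : Set V, IsIndepSet G T → S ⊆ T → S = T

/-- `m(G)`: the number of maximal independent sets of `G`. -/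
noncomputable def numMaxIndep (G : SimpleGraph V) : ℕ :=
  {S : Set V | IsMaxIndepSet G S}.ncard

/-- `C` is a vertex cover of `G`: every edge has at least one endpoint in `C`. -/
def IsVertexCover (G : SimpleGraph V) (C : Set V) : Prop :=
  ∀ ⦃u v : V⦄, G.Adj u v → u ∈ C ∨ v ∈ C

/-- `β(G)`: the minimum size of a vertex cover of `G`. -/
noncomputable def coverNumber (G : SimpleGraph V) : ℕ :=
  sInf {n : ℕ | ∃ C : Set V, IsVertexCover G C ∧ C.ncard = n}

/-- `M` is a matching of `G`: a set of edges of `G`, pairwise sharing no vertex. -/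
def IsMatching (G : SimpleGraph V) (M : Set (Sym2 V)) : Prop :=
  M ⊆ G.edgeSet ∧ ∀ e ∈ M, ∀ f ∈ M, e ≠ f → ∀ v : V, v ∈ e → v ∉ f

/-- `M` is an induced matching of `G`: a matching such that no two distinct
edges of `M` are joined by an edge of `G`. -/
def IsInducedMatching (G : SimpleGraph V) (M : Set (Sym2 V)) : Prop :=
  IsMatching G M ∧ ∀ e ∈ M, ∀ f ∈ M, e ≠ f → ∀ u v : V, u ∈ e → v ∈ f → ¬ G.Adj u v

/-- `ν(G)`: the maximum size of a matching of `G`. -/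
noncomputable def matchingNumber (G : SimpleGraph V) : ℕ :=
  sSup {n : ℕ | ∃ M : Set (Sym2 V), IsMatching G M ∧ M.ncard = n}

/-- `ν₀(G)`: the maximum size of an induced matching of `G`. -/
noncomputable def inducedMatchingNumber (G : SimpleGraph V) : ℕ :=
  sSup {n : ℕ | ∃ M : Set (Sym2 V), IsInducedMatching G M ∧ M.ncard = n}

/-- `G` is bipartite: the vertices split into two sides with every edge crossing. -/
def IsBipartite (G : SimpleGraph V) : Prop :=
  ∃ A : Set V, ∀ ⦃u v : V⦄, G.Adj u v → (u ∈ A ↔ v ∉ A)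

/-!
For a vertex cover `S`, a maximal independent set `T` is determined by its trace `T ∩ S`: a
vertex outside `S` has all its neighbours in `S`, so maximality decides whether it lies in `T`.
Hence `T ↦ T ∩ S` embeds the maximal independent sets into `𝒫 S`, and `m(G) ≤ 2 ^ |S|`.
If equality holds, the embedding is onto, so `S` itself is the trace of some maximal independent
set `T`, and `S ⊆ T` is independent.
-/

section

variable {G : SimpleGraph V} {S T T' : Set V}

theorem Set.image_inter_subset_powerset {α : Type*} (𝒜 : Set (Set α)) (s : Set α) :
    (· ∩ s) '' 𝒜 ⊆ 𝒫 s := by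
  rintro _ ⟨t, -, rfl⟩
  exact Set.inter_subset_right

theorem IsIndepSet.mono (hT : IsIndepSet G T) (h : S ⊆ T) : IsIndepSet G S :=
  fun _ _ hu hv => hT (h hu) (h hv)

theorem IsIndepSet.insert (hT : IsIndepSet G T) {v : V} (hv : ∀ w ∈ T, ¬ G.Adj v w) :
    IsIndepSet G (insert v T) := by
  rintro u w (rfl | hu) (rfl | hw) hadj
  · exact G.loopless.irrefl _ hadj
  · exact hv w hw hadj
  · exact hv u hu hadj.symm
  · exact hT hu hw hadj

theorem IsMaxIndepSet.mem_of_forall_not_adj (hT : IsMaxIndepSet G T) {v : V}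
    (hv : ∀ w ∈ T, ¬ G.Adj v w) : v ∈ T :=
  (hT.2 _ (hT.1.insert hv) (Set.subset_insert v T)) ▸ Set.mem_insert v T

theorem IsMaxIndepSet.subset_of_inter_subset (hS : IsVertexCover G S) (hT : IsIndepSet G T)
    (hT' : IsMaxIndepSet G T') (hTS : T ∩ S ⊆ T') (hT'S : T' ∩ S ⊆ T) : T ⊆ T' := by
  intro v hv
  by_cases hvS : v ∈ S
  · exact hTS ⟨hv, hvS⟩
  refine hT'.mem_of_forall_not_adj fun w hw hadj => ?_
  have hwS : w ∈ S := (hS hadj).resolve_left hvS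
  exact hT hv (hT'S ⟨hw, hwS⟩) hadj

theorem IsVertexCover.injOn_inter_maxIndep (hS : IsVertexCover G S) :
    Set.InjOn (· ∩ S) {T | IsMaxIndepSet G T} := by
  intro T hT T' hT' (h : T ∩ S = T' ∩ S)
  have hTT' : T ∩ S ⊆ T' := h.le.trans Set.inter_subset_left
  have hT'T : T' ∩ S ⊆ T := h.ge.trans Set.inter_subset_left
  exact (hT'.subset_of_inter_subset hS hT.1 hTT' hT'T).antisymm
    (hT.subset_of_inter_subset hS hT'.1 hT'T hTT')

theorem IsVertexCover.numMaxIndep_eq_ncard_image (hS : IsVertexCover G S) :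
    numMaxIndep G = ((· ∩ S) '' {T | IsMaxIndepSet G T}).ncard :=
  (hS.injOn_inter_maxIndep.ncard_image).symm

theorem IsVertexCover.exists_maxIndep_superset_of_numMaxIndep_eq (hS : IsVertexCover G S)
    (hfin : S.Finite) (hm : numMaxIndep G = 2 ^ S.ncard) :
    ∃ T, IsMaxIndepSet G T ∧ S ⊆ T := by
  have hsurj : (· ∩ S) '' {T | IsMaxIndepSet G T} = 𝒫 S := by
    refine Set.eq_of_subset_of_ncard_le (Set.image_inter_subset_powerset _ S) ?_ hfin.powerset
    rw [Set.ncard_powerset S hfin, ← hm, hS.numMaxIndep_eq_ncard_image]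
  obtain ⟨T, hT, hTS⟩ : S ∈ (· ∩ S) '' {T | IsMaxIndepSet G T} :=
    hsurj ▸ Set.mem_powerset subset_rfl
  exact ⟨T, hT, hTS.ge.trans Set.inter_subset_left⟩

end

/-- If `m(G) = 2 ^ β(G)` and `S` is a minimum vertex cover of `G`,
then `S` is an independent set of `G`. -/
theorem minCover_isIndep_of_extremal [Fintype V] (G : SimpleGraph V)
    (hm : numMaxIndep G = 2 ^ coverNumber G)
    (S : Set V) (hS : IsVertexCover G S) (hcard : S.ncard = coverNumber G) :
    IsIndepSet G S := by
  obtain ⟨T, hT, hST⟩ :=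
    hS.exists_maxIndep_superset_of_numMaxIndep_eq S.toFinite (hcard ▸ hm)
  exact hT.1.mono hST
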